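/- For c, d ∈ ℝ, the natural Λ-bilinear map M_{>c} × M_{>d} → M_{>c+d} sending (e_a, e_b) to e_{a+b} induces an isomorphism of Λ-modules M_{>c} ⊗_Λ M_{>d} ≅ M_{>c+d}. -/

import Mathlib

open scoped NNReal TensorProduct

set_option synthInstance.maxHeartbeats 1000000
set_option maxHeartbeats 1000000

abbrev Lam (k : Type) [Field k] : Type := AddMonoidAlgebra k ℝ≥0

/-- The inclusion of rings `Λ = k[ℝ≥0] → k[ℝ]` induced by `ℝ≥0 ↪ ℝ`. -/
noncomputable def incl (k : Type) [Field k] : Lam k →+* AddMonoidAlgebra k ℝ :=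
  AddMonoidAlgebra.mapDomainRingHom k NNReal.toRealHom

/-- `k[ℝ]` is a `Λ`-module via the inclusion `Λ → k[ℝ]`; under this action
`T^b • e_a = e_{a+b}` where `e_a` denotes the monomial `single a 1` of `k[ℝ]`. -/
noncomputable instance (k : Type) [Field k] : Module (Lam k) (AddMonoidAlgebra k ℝ) :=
  Module.compHom _ (incl k)

/-- `M_{>c}`: the `Λ`-submodule of `k[ℝ]` spanned by the monomials `e_a = single a 1`
with `a > c`. -/
noncomputable def Mgt (k : Type) [Field k] (c : ℝ) : Submodule (Lam k) (AddMonoidAlgebra k ℝ) :=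
  Submodule.span (Lam k)
    {f : AddMonoidAlgebra k ℝ | ∃ a : ℝ, c < a ∧ f = AddMonoidAlgebra.single a 1}

namespace MgtAux

variable {k : Type} [Field k]

lemma smul_def (l : Lam k) (f : AddMonoidAlgebra k ℝ) : l • f = incl k l * f := rfl

lemma incl_single (t : ℝ≥0) (r : k) :
    incl k (AddMonoidAlgebra.single t r) = AddMonoidAlgebra.single (t : ℝ) r := by
  simp [incl, AddMonoidAlgebra.mapDomainRingHom]

lemma support_incl (l : Lam k) {s : ℝ} (hs : s ∈ (incl k l).coeff.support) : 0 ≤ s := by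
  have : (incl k l).coeff = Finsupp.mapDomain (fun t : ℝ≥0 => (t : ℝ)) l.coeff := by
    rfl
  rw [this] at hs
  have := Finsupp.mapDomain_support hs
  simp only [Finset.mem_image] at this
  obtain ⟨t, _, rfl⟩ := this
  exact t.2

/-- The support-characterised submodule. -/
noncomputable def MgtS (k : Type) [Field k] (c : ℝ) :
    Submodule (Lam k) (AddMonoidAlgebra k ℝ) where
  carrier := {f | ∀ s ∈ f.coeff.support, c < s}
  zero_mem' := by simp
  add_mem' := by
    classical
    intro f g hf hg s hs
    have := Finsupp.support_add (g₁ := f.coeff) (g₂ := g.coeff) hs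
    rw [Finset.mem_union] at this
    rcases this with h | h
    · exact hf s h
    · exact hg s h
  smul_mem' := by
    classical
    intro l f hf s hs
    rw [smul_def] at hs
    have := AddMonoidAlgebra.support_coeff_mul_subset (incl k l) f hs
    rw [Finset.mem_add] at this
    obtain ⟨y, hy, z, hz, rfl⟩ := this
    have h1 : 0 ≤ y := support_incl l hy
    have h2 : c < z := hf z hz
    linarith

lemma Mgt_le_MgtS (c : ℝ) : Mgt k c ≤ MgtS k c := by
  rw [Mgt, Submodule.span_le]
  rintro f ⟨a, ha, rfl⟩ s hs
  classical
  have := Finsupp.support_single_subset hs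
  simp at this
  subst this
  exact ha

lemma single_mem_Mgt {c a : ℝ} (r : k) (h : c < a) :
    AddMonoidAlgebra.single a r ∈ Mgt k c := by
  have : (AddMonoidAlgebra.single a r : AddMonoidAlgebra k ℝ) =
      (AddMonoidAlgebra.single (0 : ℝ≥0) r : Lam k) • AddMonoidAlgebra.single a 1 := by
    rw [smul_def, incl_single]
    rw [AddMonoidAlgebra.single_mul_single]
    simp
  rw [this]
  exact Submodule.smul_mem _ _ (Submodule.subset_span ⟨a, h, rfl⟩)

lemma MgtS_le_Mgt (c : ℝ) : MgtS k c ≤ Mgt k c := by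
  classical
  intro f hf
  have : f = f.coeff.sum (fun s r => AddMonoidAlgebra.single s r) :=
    (AddMonoidAlgebra.sum_coeff_single f).symm
  rw [this]
  apply Submodule.sum_mem
  intro s hs
  exact single_mem_Mgt _ (hf s hs)

lemma mem_Mgt_iff {c : ℝ} {f : AddMonoidAlgebra k ℝ} :
    f ∈ Mgt k c ↔ ∀ s ∈ f.coeff.support, c < s :=
  ⟨fun h => Mgt_le_MgtS c h, fun h => MgtS_le_Mgt c h⟩


/-- monomial element of `Mgt k c` (zero if out of range). -/
noncomputable def E (k : Type) [Field k] (c a : ℝ) : Mgt k c :=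
  if h : c < a then ⟨AddMonoidAlgebra.single a 1, single_mem_Mgt 1 h⟩ else 0

lemma E_coe {c a : ℝ} (h : c < a) :
    ((E k c a : Mgt k c) : AddMonoidAlgebra k ℝ) = AddMonoidAlgebra.single a 1 := by
  rw [E, dif_pos h]

lemma smul_E {c a : ℝ} (h : c < a) (t : ℝ≥0) :
    (AddMonoidAlgebra.single t (1 : k) : Lam k) • E k c a = E k c (a + t) := by
  have h2 : c < a + (t : ℝ) := lt_of_lt_of_le h (le_add_of_nonneg_right t.2)
  apply Subtype.ext
  rw [Submodule.coe_smul, E_coe h, E_coe h2, smul_def, incl_single,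
    AddMonoidAlgebra.single_mul_single]
  rw [add_comm, one_mul]

variable {c d : ℝ}

/-- moving lemma: pure tensors of monomials depend only on the total exponent. -/
lemma move {a b a' b' : ℝ} (ha : c < a) (hb : d < b) (ha' : c < a') (hb' : d < b')
    (h : a + b = a' + b') :
    (E k c a ⊗ₜ[Lam k] E k d b : Mgt k c ⊗[Lam k] Mgt k d) = E k c a' ⊗ₜ[Lam k] E k d b' := by
  rcases le_total a a' with hle | hle
  · set t : ℝ≥0 := ⟨a' - a, by linarith⟩ with ht
    have h1 : a + (t : ℝ) = a' := by rw [ht]; show a + (a' - a) = a'; ring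
    have h2 : b' + (t : ℝ) = b := by simp [ht]; linarith
    calc (E k c a ⊗ₜ[Lam k] E k d b : Mgt k c ⊗[Lam k] Mgt k d)
        = E k c a ⊗ₜ[Lam k] ((AddMonoidAlgebra.single t (1:k) : Lam k) • E k d b') := by
          rw [smul_E hb' t, h2]
      _ = ((AddMonoidAlgebra.single t (1:k) : Lam k) • E k c a) ⊗ₜ[Lam k] E k d b' := by
          rw [TensorProduct.smul_tmul]
      _ = E k c a' ⊗ₜ[Lam k] E k d b' := by rw [smul_E ha t, h1]
  · set t : ℝ≥0 := ⟨a - a', by linarith⟩ with ht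
    have h1 : a' + (t : ℝ) = a := by rw [ht]; show a' + (a - a') = a; ring
    have h2 : b + (t : ℝ) = b' := by simp [ht]; linarith
    calc (E k c a ⊗ₜ[Lam k] E k d b : Mgt k c ⊗[Lam k] Mgt k d)
        = ((AddMonoidAlgebra.single t (1:k) : Lam k) • E k c a') ⊗ₜ[Lam k] E k d b := by
          rw [smul_E ha' t, h1]
      _ = E k c a' ⊗ₜ[Lam k] ((AddMonoidAlgebra.single t (1:k) : Lam k) • E k d b) := by
          rw [TensorProduct.smul_tmul]
      _ = E k c a' ⊗ₜ[Lam k] E k d b' := by rw [smul_E hb t, h2]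


/-- canonical even split of a monomial as a pure tensor. -/
noncomputable def sp (k : Type) [Field k] (c d s : ℝ) : Mgt k c ⊗[Lam k] Mgt k d :=
  E k c (c + (s - c - d)/2) ⊗ₜ[Lam k] E k d (d + (s - c - d)/2)

lemma sp_shift {s : ℝ} (hs : c + d < s) (t : ℝ≥0) :
    (AddMonoidAlgebra.single t (1:k) : Lam k) • sp k c d s = sp k c d (s + t) := by
  have h1 : c < c + (s - c - d)/2 := by linarith
  have h2 : d < d + (s - c - d)/2 := by linarith
  have h3 : (t : ℝ) ≥ 0 := t.2
  have h4 : d < d + (s + (t:ℝ) - c - d)/2 := by linarith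
  rw [sp, sp, TensorProduct.smul_tmul', smul_E h1 t]
  exact move (by linarith) h2 (by linarith) h4 (by ring)

/-- `Psi0 f = Σ_s f_s • sp s`. -/
noncomputable def Psi0 (k : Type) [Field k] (c d : ℝ) (f : AddMonoidAlgebra k ℝ) :
    Mgt k c ⊗[Lam k] Mgt k d :=
  f.coeff.sum (fun s r => (AddMonoidAlgebra.single (0:ℝ≥0) r : Lam k) • sp k c d s)

lemma Psi0_add (f g : AddMonoidAlgebra k ℝ) :
    Psi0 k c d (f + g) = Psi0 k c d f + Psi0 k c d g := by
  classical
  unfold Psi0; rw [AddMonoidAlgebra.coeff_add]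
  apply Finsupp.sum_add_index'
  · intro a; rw [AddMonoidAlgebra.single_zero, zero_smul]
  · intro a b₁ b₂; rw [AddMonoidAlgebra.single_add, add_smul]

lemma Psi0_single (s : ℝ) (r : k) :
    Psi0 k c d (AddMonoidAlgebra.single s r) =
      (AddMonoidAlgebra.single (0:ℝ≥0) r : Lam k) • sp k c d s := by
  classical
  unfold Psi0; rw [AddMonoidAlgebra.coeff_single]
  apply Finsupp.sum_single_index
  rw [AddMonoidAlgebra.single_zero, zero_smul]

lemma Psi0_zero : Psi0 k c d 0 = 0 := by
  unfold Psi0; rw [AddMonoidAlgebra.coeff_zero]; exact Finsupp.sum_zero_index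

lemma Psi0_mul_single (t : ℝ≥0) (u : k) (f : AddMonoidAlgebra k ℝ)
    (hf : ∀ s ∈ f.coeff.support, c + d < s) :
    Psi0 k c d (AddMonoidAlgebra.single ((t:ℝ)) u * f) =
      (AddMonoidAlgebra.single t u : Lam k) • Psi0 k c d f := by
  classical
  induction f using AddMonoidAlgebra.induction with
  | zero => rw [mul_zero, Psi0_zero, smul_zero]
  | single_add s r g hs hr ih =>
    have hsup : (AddMonoidAlgebra.single s r + g).coeff.support = {s} ∪ g.coeff.support := by
      rw [AddMonoidAlgebra.coeff_add, AddMonoidAlgebra.coeff_single, Finsupp.support_add_eq, Finsupp.support_single_ne_zero s hr]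
      rw [Finsupp.support_single_ne_zero s hr]
      simp [Finset.disjoint_singleton_left, hs]
    have hcds : c + d < s := by
      apply hf s; rw [hsup]; simp
    have hg : ∀ s' ∈ g.coeff.support, c + d < s' := by
      intro s' hs'; apply hf s'; rw [hsup]; simp [hs']
    rw [mul_add, Psi0_add, Psi0_add, smul_add, ih hg]
    congr 1
    rw [AddMonoidAlgebra.single_mul_single, Psi0_single, Psi0_single]
    have key : (AddMonoidAlgebra.single t (u*r) : Lam k) • sp k c d s =
        (AddMonoidAlgebra.single (0:ℝ≥0) (u*r) : Lam k) • sp k c d (s + t) := by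
      have : (AddMonoidAlgebra.single t (u*r) : Lam k) =
          AddMonoidAlgebra.single (0:ℝ≥0) (u*r) * AddMonoidAlgebra.single t 1 := by
        rw [AddMonoidAlgebra.single_mul_single, zero_add, mul_one]
      rw [this, mul_smul, sp_shift hcds t]
    have key2 : (AddMonoidAlgebra.single t u : Lam k) •
        ((AddMonoidAlgebra.single (0:ℝ≥0) r : Lam k) • sp k c d s) =
        (AddMonoidAlgebra.single t (u*r) : Lam k) • sp k c d s := by
      rw [← mul_smul, AddMonoidAlgebra.single_mul_single, add_zero]
    rw [key2, key, add_comm (t:ℝ) s]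

lemma Psi0_smul (l : Lam k) (f : AddMonoidAlgebra k ℝ)
    (hf : ∀ s ∈ f.coeff.support, c + d < s) :
    Psi0 k c d (l • f) = l • Psi0 k c d f := by
  classical
  rw [smul_def]
  induction l using AddMonoidAlgebra.induction_linear with
  | zero => rw [map_zero, zero_mul, Psi0_zero, zero_smul]
  | add p q hp hq => rw [map_add, add_mul, Psi0_add, hp, hq, add_smul]
  | single t u =>
    rw [incl_single]
    exact Psi0_mul_single t u f hf


lemma mul_mem {x y : AddMonoidAlgebra k ℝ} (hx : x ∈ Mgt k c) (hy : y ∈ Mgt k d) :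
    x * y ∈ Mgt k (c + d) := by
  classical
  rw [mem_Mgt_iff] at hx hy ⊢
  intro s hs
  have := AddMonoidAlgebra.support_coeff_mul_subset x y hs
  rw [Finset.mem_add] at this
  obtain ⟨a, ha, b, hb, rfl⟩ := this
  have h1 := hx a ha
  have h2 := hy b hb
  linarith

/-- The bilinear multiplication map. -/
noncomputable def B (k : Type) [Field k] (c d : ℝ) :
    Mgt k c →ₗ[Lam k] Mgt k d →ₗ[Lam k] Mgt k (c + d) where
  toFun x :=
    { toFun := fun y => ⟨x.1 * y.1, mul_mem x.2 y.2⟩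
      map_add' := fun y z => by
        apply Subtype.ext
        simp [mul_add]
      map_smul' := fun l y => by
        apply Subtype.ext
        simp only [Submodule.coe_smul, smul_def, RingHom.id_apply]
        ring }
  map_add' x z := by
    apply LinearMap.ext; intro y
    apply Subtype.ext
    simp [add_mul]
  map_smul' l x := by
    apply LinearMap.ext; intro y
    apply Subtype.ext
    simp only [LinearMap.coe_mk, AddHom.coe_mk, Submodule.coe_smul, smul_def,
      RingHom.id_apply, LinearMap.smul_apply]
    ring

noncomputable def phi (k : Type) [Field k] (c d : ℝ) :
    (Mgt k c ⊗[Lam k] Mgt k d) →ₗ[Lam k] Mgt k (c + d) :=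
  TensorProduct.lift (B k c d)

lemma phi_tmul (x : Mgt k c) (y : Mgt k d) :
    ((phi k c d (x ⊗ₜ[Lam k] y) : Mgt k (c+d)) : AddMonoidAlgebra k ℝ) = x.1 * y.1 := rfl

noncomputable def psi (k : Type) [Field k] (c d : ℝ) :
    Mgt k (c + d) →ₗ[Lam k] (Mgt k c ⊗[Lam k] Mgt k d) where
  toFun x := Psi0 k c d x.1
  map_add' x y := Psi0_add x.1 y.1
  map_smul' l x := Psi0_smul l x.1 (fun s hs => Mgt_le_MgtS (c + d) x.2 s hs)

lemma E_eq {a : ℝ} (h : AddMonoidAlgebra.single a (1:k) ∈ Mgt k c) (ha : c < a) :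
    (⟨AddMonoidAlgebra.single a 1, h⟩ : Mgt k c) = E k c a := by
  apply Subtype.ext
  rw [E_coe ha]

lemma psi_single {s : ℝ} (h : AddMonoidAlgebra.single s (1:k) ∈ Mgt k (c+d)) :
    psi k c d ⟨AddMonoidAlgebra.single s 1, h⟩ = sp k c d s := by
  show Psi0 k c d (AddMonoidAlgebra.single s 1) = sp k c d s
  rw [Psi0_single, ← AddMonoidAlgebra.one_def, one_smul]

lemma phi_sp {s : ℝ} (hs : c + d < s) :
    phi k c d (sp k c d s) = ⟨AddMonoidAlgebra.single s 1,
      single_mem_Mgt 1 (show c + d < s from hs)⟩ := by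
  have h1 : c < c + (s - c - d)/2 := by linarith
  have h2 : d < d + (s - c - d)/2 := by linarith
  apply Subtype.ext
  rw [sp, phi_tmul, E_coe h1, E_coe h2, AddMonoidAlgebra.single_mul_single, one_mul]
  congr 1
  ring

lemma phi_psi : (phi k c d) ∘ₗ (psi k c d) = LinearMap.id := by
  apply LinearMap.ext
  rintro ⟨f, hf⟩
  simp only [LinearMap.comp_apply, LinearMap.id_apply]
  induction hf using Submodule.span_induction with
  | mem f hm =>
    obtain ⟨a, ha, rfl⟩ := hm
    show phi k c d (psi k c d ⟨_, single_mem_Mgt 1 ha⟩) = ⟨_, single_mem_Mgt 1 ha⟩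
    rw [psi_single, phi_sp ha]
  | zero =>
    have : (⟨0, (Mgt k (c+d)).zero_mem⟩ : Mgt k (c+d)) = 0 := rfl
    rw [this, map_zero, map_zero]
  | add f g hfm hgm ihf ihg =>
    have : (⟨f + g, _⟩ : Mgt k (c+d)) = ⟨f, hfm⟩ + ⟨g, hgm⟩ := rfl
    rw [this, map_add, map_add, ihf, ihg]
  | smul l f hfm ih =>
    have : (⟨l • f, _⟩ : Mgt k (c+d)) = l • ⟨f, hfm⟩ := rfl
    rw [this, map_smul, map_smul, ih]

lemma psi_phi_core {a b : ℝ} (ha : c < a) (hb : d < b) :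
    psi k c d (phi k c d ((E k c a) ⊗ₜ[Lam k] (E k d b))) = (E k c a) ⊗ₜ[Lam k] (E k d b) := by
  have hab : c + d < a + b := by linarith
  have h1 : c < c + (a + b - c - d)/2 := by linarith
  have h2 : d < d + (a + b - c - d)/2 := by linarith
  have hcoe : phi k c d ((E k c a) ⊗ₜ[Lam k] (E k d b)) =
      ⟨AddMonoidAlgebra.single (a+b) 1, single_mem_Mgt 1 hab⟩ := by
    apply Subtype.ext
    rw [phi_tmul, E_coe ha, E_coe hb, AddMonoidAlgebra.single_mul_single, one_mul]
  rw [hcoe, psi_single, sp]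
  exact move h1 h2 ha hb (by ring)

lemma psi_phi : (psi k c d) ∘ₗ (phi k c d) = LinearMap.id := by
  apply TensorProduct.ext'
  rintro ⟨f, hf⟩ y
  simp only [LinearMap.comp_apply, LinearMap.id_apply]
  induction hf using Submodule.span_induction with
  | mem f hm =>
    obtain ⟨a, ha, rfl⟩ := hm
    show psi k c d (phi k c d (⟨AddMonoidAlgebra.single a 1, single_mem_Mgt 1 ha⟩ ⊗ₜ[Lam k] y)) =
      ⟨AddMonoidAlgebra.single a 1, single_mem_Mgt 1 ha⟩ ⊗ₜ[Lam k] y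
    rw [E_eq _ ha]
    obtain ⟨g, hg⟩ := y
    induction hg using Submodule.span_induction with
    | mem g hgm =>
      obtain ⟨b, hb, rfl⟩ := hgm
      show psi k c d (phi k c d (E k c a ⊗ₜ[Lam k]
          ⟨AddMonoidAlgebra.single b 1, single_mem_Mgt 1 hb⟩)) =
        E k c a ⊗ₜ[Lam k] ⟨AddMonoidAlgebra.single b 1, single_mem_Mgt 1 hb⟩
      rw [E_eq _ hb]
      exact psi_phi_core ha hb
    | zero =>
      have : (⟨0, (Mgt k d).zero_mem⟩ : Mgt k d) = 0 := rfl
      rw [this, TensorProduct.tmul_zero, map_zero, map_zero]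
    | add g g' hgm hgm' ihg ihg' =>
      have : (⟨g + g', _⟩ : Mgt k d) = ⟨g, hgm⟩ + ⟨g', hgm'⟩ := rfl
      rw [this, TensorProduct.tmul_add, map_add, map_add, ihg, ihg']
    | smul l g hgm ih =>
      have : (⟨l • g, _⟩ : Mgt k d) = l • ⟨g, hgm⟩ := rfl
      rw [this, TensorProduct.tmul_smul, map_smul, map_smul, ih]
  | zero =>
    have : (⟨0, (Mgt k c).zero_mem⟩ : Mgt k c) = 0 := rfl
    rw [this, TensorProduct.zero_tmul, map_zero, map_zero]
  | add f f' hfm hfm' ihf ihf' =>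
    have : (⟨f + f', _⟩ : Mgt k c) = ⟨f, hfm⟩ + ⟨f', hfm'⟩ := rfl
    rw [this, TensorProduct.add_tmul, map_add, map_add, ihf, ihf']
  | smul l f hfm ih =>
    have : (⟨l • f, _⟩ : Mgt k c) = l • ⟨f, hfm⟩ := rfl
    rw [this, ← TensorProduct.smul_tmul', map_smul, map_smul, ih]

end MgtAux

/-- The multiplication `e_a ⊗ e_b ↦ e_{a+b}` (i.e. multiplication in `k[ℝ]`) induces an
isomorphism of `Λ`-modules `M_{>c} ⊗_Λ M_{>d} ≅ M_{>c+d}`. -/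
theorem Mgt_tensor_iso (k : Type) [Field k] (c d : ℝ) :
    ∃ e : (Mgt k c ⊗[Lam k] Mgt k d) ≃ₗ[Lam k] Mgt k (c + d),
      ∀ (x : Mgt k c) (y : Mgt k d),
        (e (x ⊗ₜ[Lam k] y) : AddMonoidAlgebra k ℝ) =
          (x : AddMonoidAlgebra k ℝ) * (y : AddMonoidAlgebra k ℝ) := by
  refine ⟨LinearEquiv.ofLinear (MgtAux.phi k c d) (MgtAux.psi k c d)
    MgtAux.phi_psi MgtAux.psi_phi, ?_⟩
  intro x y
  exact MgtAux.phi_tmul x y
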